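/- arXiv:math/0605713 — 5 statements merged into one kernel-verified Lean document; each statement's English description precedes it below -/
import Mathlib

section
/- If μ is a fuzzy right h-ideal and ν is a fuzzy left h-ideal of a hemiring S, then the h-product μ∘ₕν is contained in μ∩ν, i.e., (μ∘ₕν)(x) ≤ min{μ(x), ν(x)} for all x ∈ S. -/
open scoped BigOperators

variable {S : Type*}

def IsFuzzySet (μ : S → ℝ) : Prop := ∀ x, μ x ∈ Set.Icc (0:ℝ) 1

def IsFuzzyLeftHIdeal [NonUnitalSemiring S] (μ : S → ℝ) : Prop :=
  IsFuzzySet μ ∧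
  (∀ x y : S, min (μ x) (μ y) ≤ μ (x + y)) ∧
  (∀ x y : S, μ y ≤ μ (x * y)) ∧
  (∀ a b x z : S, x + a + z = b + z → min (μ a) (μ b) ≤ μ x)

def IsFuzzyRightHIdeal [NonUnitalSemiring S] (μ : S → ℝ) : Prop :=
  IsFuzzySet μ ∧
  (∀ x y : S, min (μ x) (μ y) ≤ μ (x + y)) ∧
  (∀ x y : S, μ x ≤ μ (x * y)) ∧
  (∀ a b x z : S, x + a + z = b + z → min (μ a) (μ b) ≤ μ x)

/-- The h-product of two fuzzy sets (equal to 0 when no representation exists). -/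
noncomputable def hProd [NonUnitalSemiring S] (μ ν : S → ℝ) (x : S) : ℝ :=
  sSup (insert 0 {r | ∃ a₁ b₁ a₂ b₂ z : S, x + a₁ * b₁ + z = a₂ * b₂ + z ∧
    r = min (min (μ a₁) (μ a₂)) (min (ν b₁) (ν b₂))})

def IsLeftHIdeal [NonUnitalSemiring S] (A : Set S) : Prop :=
  A.Nonempty ∧ (∀ a ∈ A, ∀ b ∈ A, a + b ∈ A) ∧ (∀ s : S, ∀ a ∈ A, s * a ∈ A) ∧
  (∀ x z a b : S, a ∈ A → b ∈ A → x + a + z = b + z → x ∈ A)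

def IsRightHIdeal [NonUnitalSemiring S] (A : Set S) : Prop :=
  A.Nonempty ∧ (∀ a ∈ A, ∀ b ∈ A, a + b ∈ A) ∧ (∀ s : S, ∀ a ∈ A, a * s ∈ A) ∧
  (∀ x z a b : S, a ∈ A → b ∈ A → x + a + z = b + z → x ∈ A)

/-- h-closure of a subset of a hemiring. -/
def hCl [NonUnitalSemiring S] (A : Set S) : Set S :=
  {x | ∃ a₁ ∈ A, ∃ a₂ ∈ A, ∃ z : S, x + a₁ + z = a₂ + z}

/-- AB : the set of finite (nonempty) sums of products ab, a ∈ A, b ∈ B. -/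
def setProd [NonUnitalSemiring S] (A B : Set S) : Set S :=
  {x | ∃ (n : ℕ) (a b : Fin (n + 1) → S), (∀ i, a i ∈ A) ∧ (∀ i, b i ∈ B) ∧
    x = ∑ i, a i * b i}

def IsPrimeLeftHIdeal [NonUnitalSemiring S] (P : Set S) : Prop :=
  IsLeftHIdeal P ∧ P ≠ Set.univ ∧
  ∀ A B : Set S, IsLeftHIdeal A → IsLeftHIdeal B → setProd A B ⊆ P → A ⊆ P ∨ B ⊆ P

def IsPrimeFuzzyLeftHIdeal [NonUnitalSemiring S] (ζ : S → ℝ) : Prop :=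
  IsFuzzyLeftHIdeal ζ ∧ (∃ x y : S, ζ x ≠ ζ y) ∧
  ∀ μ ν : S → ℝ, IsFuzzyLeftHIdeal μ → IsFuzzyLeftHIdeal ν →
    (∀ x, hProd μ ν x ≤ ζ x) → (∀ x, μ x ≤ ζ x) ∨ (∀ x, ν x ≤ ζ x)

def IsHHemiregular (S : Type*) [NonUnitalSemiring S] : Prop :=
  ∀ a : S, ∃ x₁ x₂ z : S, a + a * x₁ * a + z = a * x₂ * a + z

theorem IsFuzzySet.nonneg {μ : S → ℝ} (hμ : IsFuzzySet μ) (x : S) : 0 ≤ μ x :=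
  (hμ x).1

theorem IsFuzzyRightHIdeal.min_le_of_add_mul_add_eq [NonUnitalSemiring S] {μ : S → ℝ}
    (hμ : IsFuzzyRightHIdeal μ) {x a₁ b₁ a₂ b₂ z : S} (h : x + a₁ * b₁ + z = a₂ * b₂ + z) :
    min (μ a₁) (μ a₂) ≤ μ x :=
  (min_le_min (hμ.2.2.1 a₁ b₁) (hμ.2.2.1 a₂ b₂)).trans (hμ.2.2.2 _ _ _ _ h)

theorem IsFuzzyLeftHIdeal.min_le_of_add_mul_add_eq [NonUnitalSemiring S] {ν : S → ℝ}
    (hν : IsFuzzyLeftHIdeal ν) {x a₁ b₁ a₂ b₂ z : S} (h : x + a₁ * b₁ + z = a₂ * b₂ + z) :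
    min (ν b₁) (ν b₂) ≤ ν x :=
  (min_le_min (hν.2.2.1 a₁ b₁) (hν.2.2.1 a₂ b₂)).trans (hν.2.2.2 _ _ _ _ h)

theorem hProd_le [NonUnitalSemiring S] {μ ν : S → ℝ} {x : S} {c : ℝ} (hc : 0 ≤ c)
    (h : ∀ a₁ b₁ a₂ b₂ z : S, x + a₁ * b₁ + z = a₂ * b₂ + z →
      min (min (μ a₁) (μ a₂)) (min (ν b₁) (ν b₂)) ≤ c) :
    hProd μ ν x ≤ c := by
  refine Real.sSup_le ?_ hc
  rintro r (rfl | ⟨a₁, b₁, a₂, b₂, z, hx, rfl⟩)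
  exacts [hc, h a₁ b₁ a₂ b₂ z hx]

theorem hProd_le_inter [NonUnitalSemiring S] (μ ν : S → ℝ)
    (hμ : IsFuzzyRightHIdeal μ) (hν : IsFuzzyLeftHIdeal ν) (x : S) :
    hProd μ ν x ≤ min (μ x) (ν x) :=
  hProd_le (le_min (hμ.1.nonneg x) (hν.1.nonneg x)) fun _ _ _ _ _ hx =>
    min_le_min (hμ.min_le_of_add_mul_add_eq hx) (hν.min_le_of_add_mul_add_eq hx)
end

section
/- If x belongs to the h-closure of A and y belongs to the h-closure of B, where A, B are subsets of a hemiring S, then xy belongs to the h-closure of AB. -/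
/-!
`x ∈ hCl A` says that `x + a₁ = a₂` for some `a₁, a₂ ∈ A` in the quotient of `S` by the
congruence `x ~ y ↔ ∃ z, x + z = y + z`. There, with `x + a₁ = a₂` and `y + b₁ = b₂`,
expanding gives `x y + (a₁ b₂ + a₂ b₁) = a₂ b₂ + a₁ b₁`, and both bracketed sums lie in `AB`.
-/

open scoped BigOperators

variable {S : Type*}

theorem mul_add_mul_add_eq_of_add_eq {R : Type*} [NonUnitalSemiring R] {x y a₁ a₂ b₁ b₂ : R}
    (ha : x + a₁ = a₂) (hb : y + b₁ = b₂) :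
    x * y + (a₁ * b₂ + a₂ * b₁) = a₂ * b₂ + a₁ * b₁ := by
  subst ha hb
  simp only [mul_add, add_mul]
  abel

def stableEqCon (R : Type*) [NonUnitalNonAssocSemiring R] : RingCon R where
  r x y := ∃ z, x + z = y + z
  iseqv :=
    { refl _ := ⟨0, rfl⟩
      symm := fun ⟨z, h⟩ ↦ ⟨z, h.symm⟩
      trans := fun ⟨z, h⟩ ⟨w, h'⟩ ↦ ⟨z + w, by
        rw [← add_assoc, h, add_right_comm, h', add_right_comm, add_assoc]⟩ }
  add' := fun ⟨z, h⟩ ⟨w, h'⟩ ↦ ⟨z + w, by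
    rw [add_add_add_comm, h, h', add_add_add_comm]⟩
  mul' := fun {a b c d} ⟨z, h⟩ ⟨w, h'⟩ ↦ ⟨z * c + b * w, by
    rw [← add_assoc, ← add_mul, h, add_mul, add_right_comm, ← mul_add, h', mul_add,
      add_right_comm, add_assoc]⟩

theorem mem_hCl_iff [NonUnitalSemiring S] {A : Set S} {x : S} :
    x ∈ hCl A ↔ ∃ a₁ ∈ A, ∃ a₂ ∈ A, ((x + a₁ : S) : (stableEqCon S).Quotient) = a₂ := by
  simp only [RingCon.eq]
  rfl

theorem mul_add_mul_mem_setProd [NonUnitalSemiring S] {A B : Set S} {a₁ a₂ b₁ b₂ : S}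
    (ha₁ : a₁ ∈ A) (ha₂ : a₂ ∈ A) (hb₁ : b₁ ∈ B) (hb₂ : b₂ ∈ B) :
    a₁ * b₁ + a₂ * b₂ ∈ setProd A B :=
  ⟨1, ![a₁, a₂], ![b₁, b₂], by simp [Fin.forall_fin_two, ha₁, ha₂],
    by simp [Fin.forall_fin_two, hb₁, hb₂], by simp [Fin.sum_univ_two]⟩

theorem mul_mem_hCl_setProd [NonUnitalSemiring S] (A B : Set S) (x y : S)
    (hx : x ∈ hCl A) (hy : y ∈ hCl B) : x * y ∈ hCl (setProd A B) := by
  obtain ⟨a₁, ha₁, a₂, ha₂, hxa⟩ := mem_hCl_iff.mp hx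
  obtain ⟨b₁, hb₁, b₂, hb₂, hyb⟩ := mem_hCl_iff.mp hy
  refine mem_hCl_iff.mpr ⟨_, mul_add_mul_mem_setProd ha₁ ha₂ hb₂ hb₁, _,
    mul_add_mul_mem_setProd ha₂ ha₁ hb₂ hb₁, ?_⟩
  push_cast at hxa hyb ⊢
  exact mul_add_mul_add_eq_of_add_eq hxa hyb
end

section
/- If ζ is a prime fuzzy left h-ideal of a hemiring S, then the image of ζ contains exactly two elements, ζ(0) = 1, and the set ζ⁰ = {x ∈ S | ζ(x) = ζ(0)} is a prime left h-ideal of S. -/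
open scoped BigOperators

variable {S : Type*}

/-!
If `ζ u < ζ v = c < 1`, the constant fuzzy left h-ideal `c` and the characteristic function of
the level set `{x | c ≤ ζ x}` have h-product below `ζ`, since `ζ` is closed under the
h-representations `x + a₁b₁ + z = a₂b₂ + z`; yet the first exceeds `ζ` at `u` and the second at
`v`. So every value of `ζ` strictly above another one is `1`: as `ζ` is non-constant with maximum
`ζ 0`, this forces `ζ 0 = 1` and exactly one further value. Primality of `ζ⁰` comes from
primality of `ζ` applied to the characteristic functions of left h-ideals `A`, `B` with
`AB ⊆ ζ⁰`.
-/

lemma min_indicator_one_le {α β : Type*} {A : Set α} {B : Set β} {a : α} {b : β} {r : ℝ}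
    (hr : 0 ≤ r) (h : a ∈ A → b ∈ B → 1 ≤ r) :
    min (A.indicator 1 a) (B.indicator 1 b) ≤ r := by
  by_cases ha : a ∈ A
  · by_cases hb : b ∈ B
    · simpa [ha, hb] using h ha hb
    · rw [Set.indicator_of_notMem hb]
      exact (min_le_right _ _).trans hr
  · rw [Set.indicator_of_notMem ha]
    exact (min_le_left _ _).trans hr

section

variable [NonUnitalSemiring S] {ζ : S → ℝ}

lemma isFuzzyLeftHIdeal_const {c : ℝ} (hc : c ∈ Set.Icc (0 : ℝ) 1) :
    IsFuzzyLeftHIdeal (fun _ : S => c) :=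
  ⟨fun _ => hc, fun _ _ => min_le_left _ _, fun _ _ => le_rfl, fun _ _ _ _ _ => min_le_left _ _⟩

lemma IsLeftHIdeal.isFuzzyLeftHIdeal_indicator {A : Set S} (hA : IsLeftHIdeal A) :
    IsFuzzyLeftHIdeal (A.indicator 1 : S → ℝ) := by
  obtain ⟨-, hadd, hmul, hh⟩ := hA
  have indicator_nonneg (x : S) : 0 ≤ A.indicator (1 : S → ℝ) x :=
    Set.indicator_nonneg (fun _ _ => zero_le_one) x
  have one_le_indicator {x : S} (hx : x ∈ A) : 1 ≤ A.indicator (1 : S → ℝ) x := by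
    simp [hx]
  refine ⟨fun x => ⟨indicator_nonneg x, Set.indicator_apply_le' (fun _ => le_rfl)
    (fun _ => zero_le_one)⟩, fun x y => ?_, fun x y => ?_, fun a b x z hz => ?_⟩
  · exact min_indicator_one_le (indicator_nonneg _)
      fun hx hy => one_le_indicator (hadd x hx y hy)
  · have := min_indicator_one_le (A := A) (a := y) (b := y) (indicator_nonneg (x * y))
      fun _ hy => one_le_indicator (hmul x y hy)
    rwa [min_self] at this
  · exact min_indicator_one_le (indicator_nonneg _)
      fun ha hb => one_le_indicator (hh x z a b ha hb hz)

namespace IsFuzzyLeftHIdeal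

variable (hζ : IsFuzzyLeftHIdeal ζ)
include hζ

lemma nonneg (x : S) : 0 ≤ ζ x := (hζ.1 x).1

lemma le_map_zero (x : S) : ζ x ≤ ζ 0 := by
  simpa using hζ.2.2.1 0 x

lemma isLeftHIdeal_setOf_le {c : ℝ} {v : S} (hv : c ≤ ζ v) : IsLeftHIdeal {x | c ≤ ζ x} :=
  ⟨⟨v, hv⟩, fun a ha b hb => (le_min ha hb).trans (hζ.2.1 a b),
    fun s a ha => ha.trans (hζ.2.2.1 s a),
    fun x z a b ha hb hz => (le_min ha hb).trans (hζ.2.2.2 a b x z hz)⟩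

lemma hProd_le {μ ν : S → ℝ} (hμν : ∀ a b, min (μ a) (ν b) ≤ ζ (a * b)) (x : S) :
    hProd μ ν x ≤ ζ x := by
  refine csSup_le ⟨0, Set.mem_insert 0 _⟩ ?_
  rintro r (rfl | ⟨a₁, b₁, a₂, b₂, z, hrep, rfl⟩)
  · exact hζ.nonneg x
  · calc min (min (μ a₁) (μ a₂)) (min (ν b₁) (ν b₂))
        = min (min (μ a₁) (ν b₁)) (min (μ a₂) (ν b₂)) := min_min_min_comm _ _ _ _
      _ ≤ min (ζ (a₁ * b₁)) (ζ (a₂ * b₂)) := min_le_min (hμν a₁ b₁) (hμν a₂ b₂)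
      _ ≤ ζ x := hζ.2.2.2 _ _ x z hrep

end IsFuzzyLeftHIdeal

namespace IsPrimeFuzzyLeftHIdeal

variable (hζ : IsPrimeFuzzyLeftHIdeal ζ)
include hζ

lemma eq_one_of_lt {u v : S} (huv : ζ u < ζ v) : ζ v = 1 := by
  obtain ⟨hfuz, -, hprime⟩ := hζ
  by_contra hv
  have hv : ζ v < 1 := (hfuz.1 v).2.lt_of_ne hv
  set L : Set S := {x | ζ v ≤ ζ x}
  have hL : IsLeftHIdeal L := hfuz.isLeftHIdeal_setOf_le le_rfl
  have hprod : ∀ x, hProd (fun _ => ζ v) (L.indicator 1) x ≤ ζ x := by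
    refine hfuz.hProd_le fun a b => ?_
    by_cases hb : b ∈ L
    · exact (min_le_left _ _).trans (le_trans hb (hfuz.2.2.1 a b))
    · rw [Set.indicator_of_notMem hb]
      exact (min_le_right _ _).trans (hfuz.nonneg _)
  rcases hprime _ _ (isFuzzyLeftHIdeal_const (hfuz.1 v)) hL.isFuzzyLeftHIdeal_indicator hprod
    with h | h
  · exact (h u).not_gt huv
  · exact (h v).not_gt (by simpa [L] using hv)

lemma exists_lt_map_zero : ∃ x, ζ x < ζ 0 := by
  obtain ⟨hfuz, ⟨x, y, hxy⟩, -⟩ := hζ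
  by_contra! h
  exact hxy (((h x).antisymm' (hfuz.le_map_zero x)).trans
    ((h y).antisymm' (hfuz.le_map_zero y)).symm)

lemma map_zero_eq_one : ζ 0 = 1 :=
  have ⟨_, hx⟩ := hζ.exists_lt_map_zero
  hζ.eq_one_of_lt hx

lemma range_eq_pair : ∃ a b : ℝ, a ≠ b ∧ Set.range ζ = {a, b} := by
  obtain ⟨x, hx⟩ := hζ.exists_lt_map_zero
  have hx1 : ζ x ≠ 1 := hζ.map_zero_eq_one ▸ hx.ne
  refine ⟨1, ζ x, hx1.symm, Set.Subset.antisymm ?_ ?_⟩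
  · rintro _ ⟨y, rfl⟩
    rcases lt_trichotomy (ζ y) (ζ x) with h | h | h
    · exact absurd (hζ.eq_one_of_lt h) hx1
    · exact Or.inr h
    · exact Or.inl (hζ.eq_one_of_lt h)
  · rintro _ (rfl | rfl)
    · exact ⟨0, hζ.map_zero_eq_one⟩
    · exact ⟨x, rfl⟩

lemma isPrimeLeftHIdeal_setOf_eq_map_zero : IsPrimeLeftHIdeal {x : S | ζ x = ζ 0} := by
  have hfuz := hζ.1
  have hzero := hζ.map_zero_eq_one
  have hlevel : {x : S | ζ x = ζ 0} = {x | ζ 0 ≤ ζ x} :=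
    Set.ext fun x => ⟨fun h => h.ge, (hfuz.le_map_zero x).antisymm⟩
  refine ⟨hlevel ▸ hfuz.isLeftHIdeal_setOf_le le_rfl, fun huniv => ?_, fun A B hA hB hAB => ?_⟩
  · obtain ⟨x, hx⟩ := hζ.exists_lt_map_zero
    exact hx.ne (huniv.symm ▸ Set.mem_univ x : x ∈ {x : S | ζ x = ζ 0})
  · have hprod : ∀ x, hProd (A.indicator 1) (B.indicator 1) x ≤ ζ x :=
      hfuz.hProd_le fun a b => min_indicator_one_le (hfuz.nonneg _) fun ha hb =>
        (hzero.symm.trans (hAB ⟨0, fun _ => a, fun _ => b, fun _ => ha, fun _ => hb,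
          by simp⟩).symm).le
    have mem_of_indicator_le {C : Set S} (hC : ∀ x, C.indicator 1 x ≤ ζ x) :
        C ⊆ {x | ζ x = ζ 0} := fun x hx =>
      (hfuz.le_map_zero x).antisymm (hzero ▸ by simpa [hx] using hC x)
    exact (hζ.2.2 _ _ hA.isFuzzyLeftHIdeal_indicator hB.isFuzzyLeftHIdeal_indicator
      hprod).imp mem_of_indicator_le mem_of_indicator_le

end IsPrimeFuzzyLeftHIdeal

end

theorem prime_fuzzy_left_h_ideal_structure [NonUnitalSemiring S] (ζ : S → ℝ)
    (hζ : IsPrimeFuzzyLeftHIdeal ζ) :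
    (∃ a b : ℝ, a ≠ b ∧ Set.range ζ = {a, b}) ∧ ζ 0 = 1 ∧
      IsPrimeLeftHIdeal {x : S | ζ x = ζ 0} :=
  ⟨hζ.range_eq_pair, hζ.map_zero_eq_one, hζ.isPrimeLeftHIdeal_setOf_eq_map_zero⟩
end

section
/- Let ζ be a fuzzy subset of a hemiring S such that ζ(0) = 1, the image of ζ contains exactly two elements, and ζ⁰ = {x ∈ S | ζ(x) = 1} is a prime left h-ideal of S. Then ζ is a prime fuzzy left h-ideal of S. -/
open scoped BigOperators

variable {S : Type*}

/-!
Level sets `{x | s ≤ μ x}` of fuzzy left h-ideals are left h-ideals. If `μ x₀ > ζ x₀` and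
`ν y₀ > ζ y₀`, then `s = min (μ x₀) (ν y₀)` exceeds the lower value `t` of `ζ`. The
representation `ab + 0·0 + 0 = ab + 0` gives `min (μ a) (ν b) ≤ (μ ∘ₕ ν)(ab) ≤ ζ(ab)`, so the
product of the two level sets lies in `ζ⁰ = {ζ = 1}`. Primality of `ζ⁰` puts `x₀` or `y₀` in
`ζ⁰`, where `ζ = 1` already dominates `μ` and `ν`.
-/

section HIdeal

variable [NonUnitalSemiring S] {P : Set S}

theorem IsLeftHIdeal.zero_mem (hP : IsLeftHIdeal P) : (0 : S) ∈ P := by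
  obtain ⟨p, hp⟩ := hP.1
  simpa using hP.2.2.1 0 p hp

theorem IsLeftHIdeal.setProd_subset (hP : IsLeftHIdeal P) {A B : Set S}
    (hAB : ∀ a ∈ A, ∀ b ∈ B, a * b ∈ P) : setProd A B ⊆ P := by
  rintro x ⟨n, a, b, ha, hb, rfl⟩
  exact Finset.sum_induction _ (· ∈ P) (fun x y hx hy => hP.2.1 x hx y hy) hP.zero_mem
    fun i _ => hAB _ (ha i) _ (hb i)

end HIdeal

namespace IsFuzzyLeftHIdeal

variable [NonUnitalSemiring S] {μ ν : S → ℝ}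

theorem le_apply_zero (hμ : IsFuzzyLeftHIdeal μ) (x : S) : μ x ≤ μ 0 := by
  simpa using hμ.2.2.2 x x 0 0 (by rw [zero_add, add_zero])

theorem isLeftHIdeal_upperLevel (hμ : IsFuzzyLeftHIdeal μ) {s : ℝ} (hs : ∃ x, s ≤ μ x) :
    IsLeftHIdeal {x | s ≤ μ x} :=
  ⟨hs, fun a ha b hb => (le_min ha hb).trans (hμ.2.1 a b),
    fun c a ha => ha.trans (hμ.2.2.1 c a),
    fun x z a b ha hb hxz => (le_min ha hb).trans (hμ.2.2.2 a b x z hxz)⟩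

theorem min_le_hProd_mul (hμ : IsFuzzyLeftHIdeal μ) (hν : IsFuzzyLeftHIdeal ν) (a b : S) :
    min (μ a) (ν b) ≤ hProd μ ν (a * b) := by
  have hbdd : BddAbove (insert 0 {r | ∃ a₁ b₁ a₂ b₂ z : S,
      a * b + a₁ * b₁ + z = a₂ * b₂ + z ∧
        r = min (min (μ a₁) (μ a₂)) (min (ν b₁) (ν b₂))}) := by
    refine ⟨1, ?_⟩
    rintro r (rfl | ⟨a₁, -, -, -, -, -, rfl⟩)
    · exact zero_le_one
    · exact (min_le_left _ _).trans ((min_le_left _ _).trans (hμ.1 a₁).2)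
  have hrep : min (min (μ 0) (μ a)) (min (ν 0) (ν b)) ≤ hProd μ ν (a * b) :=
    le_csSup hbdd (Set.mem_insert_of_mem _ ⟨0, 0, a, b, 0, by simp, rfl⟩)
  rwa [min_eq_right (hμ.le_apply_zero a), min_eq_right (hν.le_apply_zero b)] at hrep

end IsFuzzyLeftHIdeal

section TwoValued

variable {ζ : S → ℝ} {t : ℝ}

theorem exists_lt_one_range_eq_pair (hfuz : IsFuzzySet ζ) (hone : 1 ∈ Set.range ζ)
    (htwo : ∃ a b : ℝ, a ≠ b ∧ Set.range ζ = {a, b}) :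
    ∃ t < 1, Set.range ζ = {1, t} := by
  obtain ⟨a, b, hab, hr⟩ := htwo
  have hle : ∀ r ∈ Set.range ζ, r ≤ 1 := by
    rintro _ ⟨x, rfl⟩
    exact (hfuz x).2
  rw [hr] at hone hle
  rcases hone with rfl | rfl
  · exact ⟨b, (hle b (by simp)).lt_of_ne hab.symm, hr⟩
  · exact ⟨a, (hle a (by simp)).lt_of_ne hab, hr.trans (Set.pair_comm _ _)⟩

theorem le_apply_of_twoValued (hval : ∀ x, ζ x = 1 ∨ ζ x = t) (ht : t ≤ 1) (v : S) :
    t ≤ ζ v := by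
  rcases hval v with hv | hv <;> rw [hv]
  exact ht

theorem min_le_of_twoValued (hval : ∀ x, ζ x = 1 ∨ ζ x = t) (ht : t ≤ 1) {x y w : S}
    (h : ζ x = 1 → ζ y = 1 → ζ w = 1) : min (ζ x) (ζ y) ≤ ζ w := by
  rcases hval x with hx | hx
  · rcases hval y with hy | hy
    · rw [hx, hy, h hx hy, min_self]
    · exact (min_le_right _ _).trans (hy ▸ le_apply_of_twoValued hval ht w)
  · exact (min_le_left _ _).trans (hx ▸ le_apply_of_twoValued hval ht w)

theorem isFuzzyLeftHIdeal_of_twoValued [NonUnitalSemiring S] (hfuz : IsFuzzySet ζ)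
    (hval : ∀ x, ζ x = 1 ∨ ζ x = t) (ht : t ≤ 1) (hP : IsLeftHIdeal {x | ζ x = 1}) :
    IsFuzzyLeftHIdeal ζ := by
  obtain ⟨-, hadd, hmul, hcl⟩ := hP
  refine ⟨hfuz, fun x y => min_le_of_twoValued hval ht fun hx hy => hadd x hx y hy,
    fun x y => ?_,
    fun a b x z hxz => min_le_of_twoValued hval ht fun ha hb => hcl x z a b ha hb hxz⟩
  simpa using
    min_le_of_twoValued (x := y) (y := y) (w := x * y) hval ht fun hy _ => hmul x y hy

theorem le_or_le_of_hProd_le_twoValued [NonUnitalSemiring S] (hval : ∀ x, ζ x = 1 ∨ ζ x = t)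
    (ht : t < 1) (hP : IsPrimeLeftHIdeal {x | ζ x = 1}) {μ ν : S → ℝ}
    (hμ : IsFuzzyLeftHIdeal μ) (hν : IsFuzzyLeftHIdeal ν) (hle : ∀ x, hProd μ ν x ≤ ζ x) :
    (∀ x, μ x ≤ ζ x) ∨ (∀ x, ν x ≤ ζ x) := by
  have ht_le := le_apply_of_twoValued hval ht.le
  by_contra! ⟨⟨x₀, hx₀⟩, ⟨y₀, hy₀⟩⟩
  set s := min (μ x₀) (ν y₀)
  have hts : t < s := lt_min ((ht_le x₀).trans_lt hx₀) ((ht_le y₀).trans_lt hy₀)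
  have hprod : setProd {x | s ≤ μ x} {x | s ≤ ν x} ⊆ {x | ζ x = 1} := by
    refine hP.1.setProd_subset fun a ha b hb => ?_
    have : t < ζ (a * b) :=
      hts.trans_le ((le_min ha hb).trans ((hμ.min_le_hProd_mul hν a b).trans (hle _)))
    exact (hval (a * b)).resolve_right this.ne'
  have hx₀A : x₀ ∈ {x | s ≤ μ x} := show s ≤ μ x₀ from min_le_left _ _
  have hy₀B : y₀ ∈ {x | s ≤ ν x} := show s ≤ ν y₀ from min_le_right _ _
  rcases hP.2.2 _ _ (hμ.isLeftHIdeal_upperLevel ⟨x₀, hx₀A⟩)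
      (hν.isLeftHIdeal_upperLevel ⟨y₀, hy₀B⟩) hprod with hA | hB
  · exact (hμ.1 x₀).2.not_gt (hA hx₀A ▸ hx₀)
  · exact (hν.1 y₀).2.not_gt (hB hy₀B ▸ hy₀)

end TwoValued

theorem prime_fuzzy_left_h_ideal_of_structure_general [NonUnitalSemiring S] (ζ : S → ℝ)
    (hfuz : IsFuzzySet ζ)
    (htwo : ∃ a b : ℝ, a ≠ b ∧ Set.range ζ = {a, b})
    (hprime : IsPrimeLeftHIdeal {x : S | ζ x = 1}) :
    IsPrimeFuzzyLeftHIdeal ζ := by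
  obtain ⟨p, hp⟩ := hprime.1.1
  obtain ⟨t, ht, hr⟩ := exists_lt_one_range_eq_pair hfuz ⟨p, hp⟩ htwo
  have hval : ∀ x, ζ x = 1 ∨ ζ x = t := fun x => by
    simpa [hr] using Set.mem_range_self (f := ζ) x
  obtain ⟨q, hq⟩ : t ∈ Set.range ζ := hr ▸ Or.inr rfl
  exact ⟨isFuzzyLeftHIdeal_of_twoValued hfuz hval ht.le hprime.1,
    ⟨p, q, by rw [hp, hq]; exact ht.ne'⟩,
    fun μ ν hμ hν hle => le_or_le_of_hProd_le_twoValued hval ht hprime hμ hν hle⟩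

theorem prime_fuzzy_left_h_ideal_of_structure [NonUnitalSemiring S] (ζ : S → ℝ)
    (hfuz : IsFuzzySet ζ) (h0 : ζ 0 = 1)
    (htwo : ∃ a b : ℝ, a ≠ b ∧ Set.range ζ = {a, b})
    (hprime : IsPrimeLeftHIdeal {x : S | ζ x = 1}) :
    IsPrimeFuzzyLeftHIdeal ζ :=
  prime_fuzzy_left_h_ideal_of_structure_general ζ hfuz htwo hprime
end

section
/- The fuzzy subset μ on the hemiring of non-negative integers defined by μ(n) = 1 if n is even and μ(n) = 0.2 otherwise is a prime fuzzy left h-ideal. -/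
open scoped BigOperators

variable {S : Type*}

/-! The fuzzy set `ζ` equal to `1` on a left h-ideal `P` and to a constant `t < 1` off it is a prime
fuzzy left h-ideal as soon as the complement of `P` is closed under multiplication. Indeed, if
`μ x > ζ x` and `ν y > ζ y`, then `x, y ∉ P` and `μ x, ν y > t`; the representation
`x * y + 0 * 0 + 0 = x * y + 0` gives `(μ ∘ₕ ν)(x * y) ≥ min (μ x) (ν y) > t = ζ (x * y)`.
The even numbers form such a `P` in `ℕ`. -/

variable {p : S → Prop} [DecidablePred p] {t : ℝ}

theorem IsFuzzySet.not_and_lt_of_ite_lt {μ : S → ℝ} (hμ : IsFuzzySet μ) {x : S}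
    (h : (if p x then 1 else t) < μ x) : ¬p x ∧ t < μ x := by
  by_cases hx : p x
  · rw [if_pos hx] at h
    exact absurd (hμ x).2 h.not_ge
  · rw [if_neg hx] at h
    exact ⟨hx, h⟩

section NonUnitalSemiring

variable [NonUnitalSemiring S]

theorem IsFuzzyLeftHIdeal.le_apply_zero_s14 {μ : S → ℝ} (hμ : IsFuzzyLeftHIdeal μ) (x : S) :
    μ x ≤ μ 0 := by
  simpa using hμ.2.2.1 0 x

theorem le_hProd {μ : S → ℝ} (hμ : IsFuzzySet μ) (ν : S → ℝ) {x a₁ b₁ a₂ b₂ z : S}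
    (h : x + a₁ * b₁ + z = a₂ * b₂ + z) :
    min (min (μ a₁) (μ a₂)) (min (ν b₁) (ν b₂)) ≤ hProd μ ν x := by
  refine le_csSup ⟨1, ?_⟩ (Set.mem_insert_of_mem _ ⟨a₁, b₁, a₂, b₂, z, h, rfl⟩)
  rintro r (rfl | ⟨a₁, b₁, a₂, b₂, z, -, rfl⟩)
  · exact zero_le_one
  · exact (min_le_left _ _).trans <| (min_le_left _ _).trans (hμ a₁).2

theorem IsFuzzyLeftHIdeal.min_le_hProd_mul_s14 {μ ν : S → ℝ} (hμ : IsFuzzyLeftHIdeal μ)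
    (hν : IsFuzzyLeftHIdeal ν) (a b : S) : min (μ a) (ν b) ≤ hProd μ ν (a * b) := by
  have hrepr : a * b + 0 * 0 + 0 = a * b + 0 := by simp
  calc min (μ a) (ν b) = min (min (μ 0) (μ a)) (min (ν 0) (ν b)) := by
        rw [min_eq_right (hμ.le_apply_zero_s14 a), min_eq_right (hν.le_apply_zero_s14 b)]
    _ ≤ hProd μ ν (a * b) := le_hProd hμ.1 ν hrepr

theorem isFuzzyLeftHIdeal_ite (hadd : ∀ a, p a → ∀ b, p b → p (a + b))
    (hmul : ∀ s a, p a → p (s * a)) (hclosed : ∀ x z a b, p a → p b → x + a + z = b + z → p x)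
    (ht₀ : 0 ≤ t) (ht₁ : t ≤ 1) : IsFuzzyLeftHIdeal fun x => if p x then 1 else t := by
  set ζ : S → ℝ := fun x => if p x then 1 else t
  have min_le : ∀ a b x, (p a → p b → p x) → min (ζ a) (ζ b) ≤ ζ x := fun a b x h => by
    by_cases hx : p x
    · simp only [ζ, hx, if_true]; split_ifs <;> simp [ht₁]
    · have hab : ¬p a ∨ ¬p b := by tauto
      rcases hab with ha | hb
      · exact min_le_of_left_le (by simp only [ζ, ha, hx, if_false, le_refl])
      · exact min_le_of_right_le (by simp only [ζ, hb, hx, if_false, le_refl])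
  have hfuzzy : IsFuzzySet ζ := fun x => by
    simp only [ζ, Set.mem_Icc]; split_ifs <;> constructor <;> linarith
  refine ⟨hfuzzy, fun x y => min_le x y _ (hadd x · y), fun s a => ?_,
    fun a b x z h => min_le a b x (hclosed x z a b · · h)⟩
  simpa using min_le a a (s * a) fun ha _ => hmul s a ha

theorem isPrimeFuzzyLeftHIdeal_ite (hP : IsLeftHIdeal {x | p x}) (hne : ∃ x, ¬p x)
    (hprime : ∀ a b, ¬p a → ¬p b → ¬p (a * b)) (ht₀ : 0 ≤ t) (ht₁ : t < 1) :
    IsPrimeFuzzyLeftHIdeal fun x => if p x then 1 else t := by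
  obtain ⟨⟨d, hd⟩, hadd, hmul, hclosed⟩ := hP
  obtain ⟨c, hc⟩ := hne
  have hzero : p 0 := by simpa using hmul 0 d hd
  refine ⟨isFuzzyLeftHIdeal_ite hadd hmul hclosed ht₀ ht₁.le,
    ⟨0, c, by simp [hzero, hc, ht₁.ne']⟩, fun μ ν hμ hν hprod => ?_⟩
  by_contra! hlt
  obtain ⟨⟨x, hx⟩, ⟨y, hy⟩⟩ := hlt
  obtain ⟨hpx, hμx⟩ := hμ.1.not_and_lt_of_ite_lt hx
  obtain ⟨hpy, hνy⟩ := hν.1.not_and_lt_of_ite_lt hy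
  have hle : min (μ x) (ν y) ≤ t := by
    simpa [hprime x y hpx hpy] using (hμ.min_le_hProd_mul_s14 hν x y).trans (hprod (x * y))
  exact (lt_min hμx hνy).not_ge hle

end NonUnitalSemiring

theorem isLeftHIdeal_even : IsLeftHIdeal {n : ℕ | Even n} :=
  ⟨⟨0, .zero⟩, fun _ ha _ hb => ha.add hb, fun s _ ha => ha.mul_left s,
    fun x z a b ha hb h => by
      have hxa : x + a = b := Nat.add_right_cancel h
      exact (Nat.even_add.mp (hxa ▸ hb)).mpr ha⟩

theorem even_indicator_prime_fuzzy :
    IsPrimeFuzzyLeftHIdeal (fun n : ℕ => if Even n then (1:ℝ) else 0.2) :=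
  isPrimeFuzzyLeftHIdeal_ite isLeftHIdeal_even ⟨1, Nat.not_even_one⟩
    (fun _ _ ha hb => by simp [Nat.even_mul, ha, hb]) (by norm_num) (by norm_num)
end
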